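/- arXiv:2206.11562 — 3 statements merged into one kernel-verified Lean document; each statement's English description precedes it below -/
import Mathlib

section
/- Let F and G be nonempty finite sets in ℝⁿ and let x be a point with D(x,F) < D(x,G) (a 'safe' point). Define the separation Sep(x) := min_{x''∈G} max_{x'∈F} (d(x,x'')² - d(x,x')²)/(2·d(x',x'')) and the fast-separation FS(x) := (D(x,G) - D(x,F))/2. Then 0 ≤ FS(x) ≤ Sep(x). -/
theorem stmt5 {n : ℕ} (F G : Finset (EuclideanSpace ℝ (Fin n)))
    (hF : F.Nonempty) (hG : G.Nonempty) (hdisj : Disjoint F G)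
    (x : EuclideanSpace ℝ (Fin n))
    (h : F.inf' hF (fun a => dist x a) < G.inf' hG (fun a => dist x a)) :
    0 ≤ (G.inf' hG (fun a => dist x a) - F.inf' hF (fun a => dist x a)) / 2 ∧
    (G.inf' hG (fun a => dist x a) - F.inf' hF (fun a => dist x a)) / 2 ≤
      G.inf' hG (fun x'' => F.sup' hF (fun x' =>
        (dist x x'' ^ 2 - dist x x' ^ 2) / (2 * dist x' x''))) := by
  constructor
  · linarith
  · apply Finset.le_inf'
    intro x'' hx''
    obtain ⟨x', hx', hx'eq⟩ := F.exists_mem_eq_inf' hF (fun a => dist x a)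
    apply le_trans _ (Finset.le_sup' _ hx')
    set a := dist x x' with ha
    set b := dist x x'' with hb
    set c := dist x' x'' with hc
    have hDF : F.inf' hF (fun a => dist x a) = a := hx'eq
    have hDG : G.inf' hG (fun a => dist x a) ≤ b :=
      Finset.inf'_le _ hx''
    have hab : a < G.inf' hG (fun a => dist x a) := by rw [← hDF]; exact h
    have ha0 : 0 ≤ a := dist_nonneg
    have hne : x' ≠ x'' := by
      intro e; exact (Finset.disjoint_left.mp hdisj hx') (e ▸ hx'')
    have hc0 : 0 < c := dist_pos.mpr hne
    have htri : c ≤ a + b := by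
      calc c ≤ dist x' x + dist x x'' := dist_triangle _ _ _
        _ = a + b := by rw [dist_comm x' x]
    have hba : a ≤ b := le_of_lt (lt_of_lt_of_le hab hDG)
    have key : (b - a) / 2 ≤ (b ^ 2 - a ^ 2) / (2 * c) := by
      rw [div_le_div_iff₀ (by norm_num) (by positivity)]
      nlinarith [sq_nonneg (b - a)]
    calc (G.inf' hG (fun a => dist x a) - F.inf' hF (fun a => dist x a)) / 2
        ≤ (b - a) / 2 := by rw [hDF]; linarith
      _ ≤ (b ^ 2 - a ^ 2) / (2 * c) := key
end

section
/- Let F and G be nonempty finite sets in ℝⁿ and let x satisfy D(x,F) < D(x,G). With Sep(x) := min_{x''∈G} max_{x'∈F} (d(x,x'')² - d(x,x')²)/(2·d(x',x'')) and FS(x) := (D(x,G) - D(x,F))/2, one has |Sep(x) - FS(x)| ≤ (D(x,F) + D(x,G))/2. -/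
theorem stmt6 {n : ℕ} (F G : Finset (EuclideanSpace ℝ (Fin n)))
    (hF : F.Nonempty) (hG : G.Nonempty) (hdisj : Disjoint F G)
    (x : EuclideanSpace ℝ (Fin n))
    (h : F.inf' hF (fun a => dist x a) < G.inf' hG (fun a => dist x a)) :
    |G.inf' hG (fun x'' => F.sup' hF (fun x' =>
        (dist x x'' ^ 2 - dist x x' ^ 2) / (2 * dist x' x''))) -
      (G.inf' hG (fun a => dist x a) - F.inf' hF (fun a => dist x a)) / 2| ≤
    (F.inf' hF (fun a => dist x a) + G.inf' hG (fun a => dist x a)) / 2 := by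
  set dF := F.inf' hF (fun a => dist x a) with hdF
  set dG := G.inf' hG (fun a => dist x a) with hdG
  set Sep := G.inf' hG (fun x'' => F.sup' hF (fun x' =>
      (dist x x'' ^ 2 - dist x x' ^ 2) / (2 * dist x' x''))) with hSep
  have hdF0 : 0 ≤ dF := Finset.le_inf' hF _ (fun a _ => dist_nonneg)
  obtain ⟨zF, hzF, hzFeq⟩ := F.exists_mem_eq_inf' hF (fun a => dist x a)
  obtain ⟨zG, hzG, hzGeq⟩ := G.exists_mem_eq_inf' hG (fun a => dist x a)
  have hne : ∀ a ∈ F, ∀ b ∈ G, a ≠ b := fun a ha b hb hab =>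
    (Finset.disjoint_left.mp hdisj ha (hab ▸ hb))
  -- lower bound: 0 ≤ Sep
  have hlow : 0 ≤ Sep := by
    apply Finset.le_inf' hG
    intro z'' hz''
    have h1 : dG ≤ dist x z'' := Finset.inf'_le _ hz''
    have hc : 0 < dist zF z'' := dist_pos.mpr (hne zF hzF z'' hz'')
    have : (0:ℝ) ≤ (dist x z'' ^ 2 - dist x zF ^ 2) / (2 * dist zF z'') := by
      apply div_nonneg _ (by positivity)
      have : dist x zF = dF := hzFeq.symm
      nlinarith [dist_nonneg (x := x) (y := zF)]
    exact this.trans (Finset.le_sup' (fun x' => (dist x z'' ^ 2 - dist x x' ^ 2) / (2 * dist x' z'')) hzF)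
  -- upper bound: Sep ≤ dG
  have hup : Sep ≤ dG := by
    have h1 : Sep ≤ F.sup' hF (fun x' =>
        (dist x zG ^ 2 - dist x x' ^ 2) / (2 * dist x' zG)) :=
      Finset.inf'_le _ hzG
    refine h1.trans (Finset.sup'_le hF _ ?_)
    intro z' hz'
    have hc : 0 < dist z' zG := dist_pos.mpr (hne z' hz' zG hzG)
    have htri : dist x zG ≤ dist x z' + dist z' zG := dist_triangle x z' zG
    have hb : 0 ≤ dist x z' := dist_nonneg
    have ha : dist x zG = dG := hzGeq.symm
    rw [div_le_iff₀ (by positivity)]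
    nlinarith [sq_nonneg (dist x zG - dist x z')]
  rw [abs_le]
  constructor <;> linarith
end

section
/- Let F and G be nonempty finite sets in ℝⁿ with F ∩ G = ∅, let x be a safe point (D(x,F) < D(x,G)), and let Sep(x) := min_{x''∈G} max_{x'∈F} (d(x,x'')² - d(x,x')²)/(2·d(x',x'')). Then for every point y with d(x,y) < Sep(x) and every z'' ∈ G, there exists z' ∈ F with d(y,z') < d(y,z''); in particular D(y,F) < D(y,G). -/
open scoped RealInnerProductSpace

lemma key_sep {E : Type*} [NormedAddCommGroup E] [InnerProductSpace ℝ E]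
    (x y a b : E)
    (h : dist x y < (dist x b ^ 2 - dist x a ^ 2) / (2 * dist a b)) :
    dist y a < dist y b := by
  have hxy : (0:ℝ) ≤ dist x y := dist_nonneg
  have hab : 0 < dist a b := by
    rcases lt_or_eq_of_le (dist_nonneg : (0:ℝ) ≤ dist a b) with h' | h'
    · exact h'
    · exfalso; rw [← h'] at h; simp at h; linarith
  have h2 : dist x y * (2 * dist a b) < dist x b ^ 2 - dist x a ^ 2 :=
    (lt_div_iff₀ (by positivity)).mp h
  have e : dist y a ^ 2 - dist y b ^ 2
      = dist x a ^ 2 - dist x b ^ 2 + 2 * ⟪y - x, b - a⟫ := by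
    simp only [dist_eq_norm, ← real_inner_self_eq_norm_sq, inner_sub_left,
      inner_sub_right]
    have h1 : ⟪y, x⟫ = ⟪x, y⟫ := real_inner_comm _ _
    have h2 : ⟪y, a⟫ = ⟪a, y⟫ := real_inner_comm _ _
    have h3 : ⟪y, b⟫ = ⟪b, y⟫ := real_inner_comm _ _
    have h4 : ⟪x, a⟫ = ⟪a, x⟫ := real_inner_comm _ _
    have h5 : ⟪x, b⟫ = ⟪b, x⟫ := real_inner_comm _ _
    ring_nf
    linarith
  have cs : ⟪y - x, b - a⟫ ≤ ‖y - x‖ * ‖b - a‖ := real_inner_le_norm _ _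
  have hn1 : ‖y - x‖ = dist x y := by rw [← dist_eq_norm, dist_comm]
  have hn2 : ‖b - a‖ = dist a b := by rw [← dist_eq_norm, dist_comm]
  rw [hn1, hn2] at cs
  have hlt : dist y a ^ 2 < dist y b ^ 2 := by nlinarith
  have := dist_nonneg (x := y) (y := a)
  have := dist_nonneg (x := y) (y := b)
  nlinarith

theorem stmt7 {n : ℕ} (F G : Finset (EuclideanSpace ℝ (Fin n)))
    (hF : F.Nonempty) (hG : G.Nonempty) (hdisj : Disjoint F G)
    (x : EuclideanSpace ℝ (Fin n))
    (h : F.inf' hF (fun a => dist x a) < G.inf' hG (fun a => dist x a))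
    (y : EuclideanSpace ℝ (Fin n))
    (hy : dist x y < G.inf' hG (fun x'' => F.sup' hF (fun x' =>
        (dist x x'' ^ 2 - dist x x' ^ 2) / (2 * dist x' x'')))) :
    (∀ z'' ∈ G, ∃ z' ∈ F, dist y z' < dist y z'') ∧
    F.inf' hF (fun a => dist y a) < G.inf' hG (fun a => dist y a) := by
  have main : ∀ z'' ∈ G, ∃ z' ∈ F, dist y z' < dist y z'' := by
    intro z'' hz''
    have h1 : dist x y < F.sup' hF (fun x' =>
        (dist x z'' ^ 2 - dist x x' ^ 2) / (2 * dist x' z'')) :=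
      lt_of_lt_of_le hy (Finset.inf'_le _ hz'')
    obtain ⟨z', hz', he⟩ := Finset.exists_mem_eq_sup' hF
      (fun x' => (dist x z'' ^ 2 - dist x x' ^ 2) / (2 * dist x' z''))
    rw [he] at h1
    exact ⟨z', hz', key_sep x y z' z'' h1⟩
  refine ⟨main, ?_⟩
  obtain ⟨z'', hz'', he⟩ := Finset.exists_mem_eq_inf' hG (fun a => dist y a)
  obtain ⟨z', hz', hlt⟩ := main z'' hz''
  calc F.inf' hF (fun a => dist y a) ≤ dist y z' := Finset.inf'_le _ hz'
    _ < dist y z'' := hlt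
    _ = _ := he.symm
end
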